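/- The divergence measure D = ∫₀^∞ (F̄(x) − Ḡ(x))² dx satisfies D = E[min(X₁, X₂)] + E[min(Y₁, Y₂)] − 2·E[min(X₁, Y₁)], where X₁, X₂ are i.i.d. with survival function F̄ and Y₁, Y₂ are i.i.d. with survival function Ḡ, all four variables independent. -/

import Mathlib

open MeasureTheory ProbabilityTheory Set

section Aux

variable {Ω : Type*} [MeasureSpace Ω] [IsProbabilityMeasure (ℙ : Measure Ω)]

lemma surv_measurable (U : Ω → ℝ) :
    Measurable (fun t : ℝ => (ℙ {a | t < U a}).toReal) :=
  Measurable.ennreal_toReal (Antitone.measurable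
    (fun _ _ hst => measure_mono (fun _ h => lt_of_le_of_lt hst h)))

lemma surv_integrableOn {U : Ω → ℝ} (hUnn : 0 ≤ᵐ[ℙ] U) (hUi : Integrable U ℙ) :
    IntegrableOn (fun t : ℝ => (ℙ {a | t < U a}).toReal) (Ioi 0) := by
  refine ⟨(surv_measurable U).aestronglyMeasurable, ?_⟩
  rw [hasFiniteIntegral_iff_ofReal (Filter.Eventually.of_forall fun t => ENNReal.toReal_nonneg)]
  have key := lintegral_eq_lintegral_meas_lt ℙ hUnn hUi.aemeasurable
  have : ∫⁻ t in Ioi (0:ℝ), ENNReal.ofReal ((ℙ {a | t < U a}).toReal)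
      = ∫⁻ t in Ioi (0:ℝ), ℙ {a | t < U a} := by
    refine lintegral_congr fun t => ?_
    exact ENNReal.ofReal_toReal (measure_ne_top _ _)
  rw [this, ← key]
  exact hUi.lintegral_lt_top

lemma min_exp_eq {U V : Ω → ℝ} (hU : Measurable U) (hV : Measurable V)
    (hUnn : 0 ≤ᵐ[ℙ] U) (hVnn : 0 ≤ᵐ[ℙ] V)
    (hUi : Integrable U ℙ) (hind : IndepFun U V ℙ) :
    ∫ ω, min (U ω) (V ω) =
      ∫ t in Ioi (0:ℝ), (ℙ {a | t < U a}).toReal * (ℙ {a | t < V a}).toReal := by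
  have hmin_nn : 0 ≤ᵐ[ℙ] fun ω => min (U ω) (V ω) := by
    filter_upwards [hUnn, hVnn] with ω h1 h2 using le_min h1 h2
  have hmin_int : Integrable (fun ω => min (U ω) (V ω)) ℙ := by
    refine hUi.mono' ((hU.min hV).aestronglyMeasurable) ?_
    filter_upwards [hUnn, hVnn] with ω h1 h2
    rw [Real.norm_eq_abs, abs_of_nonneg (le_min h1 h2)]
    exact min_le_left _ _
  rw [hmin_int.integral_eq_integral_meas_lt hmin_nn]
  refine setIntegral_congr_fun measurableSet_Ioi fun t _ => ?_
  have hset : {a | t < min (U a) (V a)} = U ⁻¹' (Ioi t) ∩ V ⁻¹' (Ioi t) := by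
    ext a; simp [lt_min_iff, and_comm]
  rw [hset, measureReal_def, hind.measure_inter_preimage_eq_mul _ _ measurableSet_Ioi measurableSet_Ioi,
    ENNReal.toReal_mul]
  rfl

end Aux

/-- `D = ∫₀^∞ (F̄ − Ḡ)² dx = E[min(X₁,X₂)] + E[min(Y₁,Y₂)] − 2 E[min(X₁,Y₁)]`,
for `X₁, X₂` i.i.d. with survival function `F̄`, `Y₁, Y₂` i.i.d. with survival
function `Ḡ`, all four variables independent, with finite expectations. -/
theorem divergence_eq_min_expectations
    {Ω : Type*} [MeasureSpace Ω] [IsProbabilityMeasure (ℙ : Measure Ω)]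
    (X₁ X₂ Y₁ Y₂ : Ω → ℝ)
    (hX₁ : Measurable X₁) (hX₂ : Measurable X₂)
    (hY₁ : Measurable Y₁) (hY₂ : Measurable Y₂)
    (hXpos : ∀ ω, 0 ≤ X₁ ω) (hYpos : ∀ ω, 0 ≤ Y₁ ω)
    (hidX : Measure.map X₁ ℙ = Measure.map X₂ ℙ)
    (hidY : Measure.map Y₁ ℙ = Measure.map Y₂ ℙ)
    (hindep : iIndepFun
      ![X₁, X₂, Y₁, Y₂] ℙ)
    (hXint : Integrable X₁ ℙ) (hYint : Integrable Y₁ ℙ) :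
    ∫ x in Ioi (0 : ℝ), ((ℙ {ω | x < X₁ ω}).toReal - (ℙ {ω | x < Y₁ ω}).toReal) ^ 2
      = (∫ ω, min (X₁ ω) (X₂ ω)) + (∫ ω, min (Y₁ ω) (Y₂ ω))
        - 2 * ∫ ω, min (X₁ ω) (Y₁ ω) := by
  -- notation
  set F : ℝ → ℝ := fun t => (ℙ {a | t < X₁ a}).toReal with hF
  set G : ℝ → ℝ := fun t => (ℙ {a | t < Y₁ a}).toReal with hG
  -- equal tails for X₂, Y₂
  have tailX : ∀ t : ℝ, ℙ {a | t < X₂ a} = ℙ {a | t < X₁ a} := fun t => by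
    have h1 : ℙ {a | t < X₂ a} = Measure.map X₂ ℙ (Ioi t) := by
      rw [Measure.map_apply hX₂ measurableSet_Ioi]; rfl
    have h2 : ℙ {a | t < X₁ a} = Measure.map X₁ ℙ (Ioi t) := by
      rw [Measure.map_apply hX₁ measurableSet_Ioi]; rfl
    rw [h1, h2, hidX]
  have tailY : ∀ t : ℝ, ℙ {a | t < Y₂ a} = ℙ {a | t < Y₁ a} := fun t => by
    have h1 : ℙ {a | t < Y₂ a} = Measure.map Y₂ ℙ (Ioi t) := by
      rw [Measure.map_apply hY₂ measurableSet_Ioi]; rfl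
    have h2 : ℙ {a | t < Y₁ a} = Measure.map Y₁ ℙ (Ioi t) := by
      rw [Measure.map_apply hY₁ measurableSet_Ioi]; rfl
    rw [h1, h2, hidY]
  -- nonnegativity a.e.
  have hX₁nn : 0 ≤ᵐ[ℙ] X₁ := Filter.Eventually.of_forall hXpos
  have hY₁nn : 0 ≤ᵐ[ℙ] Y₁ := Filter.Eventually.of_forall hYpos
  -- pairwise independence
  have indXX : IndepFun X₁ X₂ ℙ := by
    have := hindep.indepFun (i := 0) (j := 1) (by decide)
    simpa using this
  have indYY : IndepFun Y₁ Y₂ ℙ := by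
    have := hindep.indepFun (i := 2) (j := 3) (by decide)
    simpa using this
  have indXY : IndepFun X₁ Y₁ ℙ := by
    have := hindep.indepFun (i := 0) (j := 2) (by decide)
    simpa using this
  -- the three mins
  have hXX : ∫ ω, min (X₁ ω) (X₂ ω) = ∫ t in Ioi (0:ℝ), F t * F t := by
    rw [min_exp_eq hX₁ hX₂ hX₁nn ?_ hXint indXX]
    · refine setIntegral_congr_fun measurableSet_Ioi fun t _ => ?_
      simp only [hF, tailX t]
    · rw [Filter.EventuallyLE, ae_iff]
      simp only [Pi.zero_apply]
      have : {a | ¬ (0:ℝ) ≤ X₂ a} = X₂ ⁻¹' (Iio 0) := by ext a; simp [not_le]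
      rw [this, ← Measure.map_apply hX₂ measurableSet_Iio, ← hidX,
        Measure.map_apply hX₁ measurableSet_Iio]
      have : X₁ ⁻¹' (Iio 0) = ∅ := by
        ext a; simp [not_lt.mpr (hXpos a)]
      simp [this]
  have hYY : ∫ ω, min (Y₁ ω) (Y₂ ω) = ∫ t in Ioi (0:ℝ), G t * G t := by
    rw [min_exp_eq hY₁ hY₂ hY₁nn ?_ hYint indYY]
    · refine setIntegral_congr_fun measurableSet_Ioi fun t _ => ?_
      simp only [hG, tailY t]
    · rw [Filter.EventuallyLE, ae_iff]
      simp only [Pi.zero_apply]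
      have : {a | ¬ (0:ℝ) ≤ Y₂ a} = Y₂ ⁻¹' (Iio 0) := by ext a; simp [not_le]
      rw [this, ← Measure.map_apply hY₂ measurableSet_Iio, ← hidY,
        Measure.map_apply hY₁ measurableSet_Iio]
      have : Y₁ ⁻¹' (Iio 0) = ∅ := by
        ext a; simp [not_lt.mpr (hYpos a)]
      simp [this]
  have hXY : ∫ ω, min (X₁ ω) (Y₁ ω) = ∫ t in Ioi (0:ℝ), F t * G t :=
    min_exp_eq hX₁ hY₁ hX₁nn hY₁nn hXint indXY
  -- integrability on Ioi 0
  have hFint : IntegrableOn F (Ioi 0) := surv_integrableOn hX₁nn hXint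
  have hGint : IntegrableOn G (Ioi 0) := surv_integrableOn hY₁nn hYint
  have hFle1 : ∀ t, F t ≤ 1 := fun t => by
    simpa using ENNReal.toReal_mono (by simp) (prob_le_one (μ := (ℙ : Measure Ω)))
  have hGle1 : ∀ t, G t ≤ 1 := fun t => by
    simpa using ENNReal.toReal_mono (by simp) (prob_le_one (μ := (ℙ : Measure Ω)))
  have hFnn : ∀ t, 0 ≤ F t := fun t => ENNReal.toReal_nonneg
  have hGnn : ∀ t, 0 ≤ G t := fun t => ENNReal.toReal_nonneg
  have hprod : ∀ (P Q : ℝ → ℝ), (∀ t, 0 ≤ P t) → (∀ t, P t ≤ 1) → (∀ t, 0 ≤ Q t) →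
      (∀ t, Q t ≤ 1) → Measurable P → Measurable Q → IntegrableOn P (Ioi 0) →
      IntegrableOn (fun t => P t * Q t) (Ioi 0) := by
    intro P Q hPnn hPle hQnn hQle hPm hQm hPi
    refine hPi.mono' ((hPm.mul hQm).aestronglyMeasurable) ?_
    refine Filter.Eventually.of_forall fun t => ?_
    rw [Real.norm_eq_abs, abs_of_nonneg (mul_nonneg (hPnn t) (hQnn t))]
    calc P t * Q t ≤ P t * 1 := by
          exact mul_le_mul_of_nonneg_left (hQle t) (hPnn t)
      _ = P t := mul_one _
  have hFm : Measurable F := surv_measurable X₁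
  have hGm : Measurable G := surv_measurable Y₁
  have hFF : IntegrableOn (fun t => F t * F t) (Ioi 0) :=
    hprod F F hFnn hFle1 hFnn hFle1 hFm hFm hFint
  have hGG : IntegrableOn (fun t => G t * G t) (Ioi 0) :=
    hprod G G hGnn hGle1 hGnn hGle1 hGm hGm hGint
  have hFG : IntegrableOn (fun t => F t * G t) (Ioi 0) :=
    hprod F G hFnn hFle1 hGnn hGle1 hFm hGm hFint
  -- expand the square
  have expand : ∀ t : ℝ, (F t - G t) ^ 2 = F t * F t + G t * G t - 2 * (F t * G t) := by
    intro t; ring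
  calc ∫ t in Ioi (0:ℝ), (F t - G t) ^ 2
      = ∫ t in Ioi (0:ℝ), (F t * F t + G t * G t - 2 * (F t * G t)) := by
        exact integral_congr_ae (Filter.Eventually.of_forall fun t => expand t)
    _ = (∫ t in Ioi (0:ℝ), F t * F t) + (∫ t in Ioi (0:ℝ), G t * G t)
        - 2 * ∫ t in Ioi (0:ℝ), F t * G t := by
        have hsum : IntegrableOn (fun t => F t * F t + G t * G t) (Ioi 0) :=
          hFF.add hGG
        have hmul : IntegrableOn (fun t => 2 * (F t * G t)) (Ioi 0) :=
          hFG.const_mul 2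
        rw [integral_sub hsum hmul, integral_add hFF hGG, integral_const_mul]
    _ = (∫ ω, min (X₁ ω) (X₂ ω)) + (∫ ω, min (Y₁ ω) (Y₂ ω))
        - 2 * ∫ ω, min (X₁ ω) (Y₁ ω) := by rw [hXX, hYY, hXY]
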